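/- Let η ∈ C³[0,1] and ρ = η − Pη. Then there exists a constant C, depending only on ‖η⁽³⁾‖_{L^∞(0,1)} and not on N, such that for all N ≥ 2, max_{1≤i≤N} |ρ'(x_{i+1/2})| ≤ C h², where x_{i+1/2} = (x_i + x_{i+1})/2 is the midpoint of I_i and ρ' denotes the derivative of ρ (which exists at each midpoint since Pη is affine on the interior of each I_i). -/

import Mathlib

/-!
Testing the Galerkin orthogonality of `ρ = η - Pη` against each hat function, and replacing `ρ`
on every cell by its second-order Taylor model at the left node, shows that the P1 mass matrix
(diagonally dominant, with diagonal of size `h`) maps the corrected nodal errors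
`ρ(x_j) - η''(x_j) h² / 12` to `O(h⁴)`. Its inverse has `∞`-norm `O(1/h)`, so these are `O(h³)`,
and consecutive nodal errors of `ρ` differ by `O(h³)`.

At the midpoint of a cell, `(Pη)'` is the difference quotient of `Pη`, and Taylor expansion
about the midpoint (whose second-order terms cancel) shows that `η'` is the difference quotient
of `η` up to `O(h²)`. So `ρ'` there is the difference quotient of the nodal errors up to `O(h²)`.
-/

noncomputable section
open Set

/-- The L²(0,1) inner product of two real functions. -/
def ip (f g : ℝ → ℝ) : ℝ := ∫ y in (0:ℝ)..1, f y * g y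

/-- The L²(0,1) norm. -/
def nrm (f : ℝ → ℝ) : ℝ := Real.sqrt (∫ y in (0:ℝ)..1, (f y)^2)

/-- `g` is the L²(0,1)-orthogonal projection of `f` onto `S`. -/
def IsL2ProjOn (S : Set (ℝ → ℝ)) (f g : ℝ → ℝ) : Prop :=
  g ∈ S ∧ ∀ χ ∈ S, ip (fun y => f y - g y) χ = 0

/-- Continuous piecewise linear functions on the uniform mesh of `[0,1]`
with `N` subintervals. -/
def PL (N : ℕ) : Set (ℝ → ℝ) :=
  {φ | ContinuousOn φ (Icc (0:ℝ) 1) ∧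
    ∀ i < N, ∃ a b : ℝ, ∀ y ∈ Icc ((i : ℝ)/N) (((i : ℝ)+1)/N), φ y = a * y + b}

/-- Elements of `PL N` vanishing at 0 and 1. -/
def PL0 (N : ℕ) : Set (ℝ → ℝ) := {φ | φ ∈ PL N ∧ φ 0 = 0 ∧ φ 1 = 0}

lemma abs_sub_le_of_hasDerivWithinAt {s : Set ℝ} (hs : Convex ℝ s) {g g' : ℝ → ℝ} {x y K : ℝ}
    (hx : x ∈ s) (hy : y ∈ s) (hg : ∀ t ∈ s, HasDerivWithinAt g (g' t) s t)
    (hK : ∀ t ∈ uIcc x y, |g' t| ≤ K) :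
    |g y - g x| ≤ K * |y - x| := by
  have hsub := hs.ordConnected.uIcc_subset hx hy
  simpa only [Real.norm_eq_abs] using Convex.norm_image_sub_le_of_norm_hasDerivWithin_le
    (fun t ht => (hg t (hsub ht)).mono hsub) hK (convex_uIcc x y) left_mem_uIcc right_mem_uIcc

section Taylor

variable {s : Set ℝ} {f f' f'' : ℝ → ℝ} {M : ℝ}

lemma abs_taylor_one_le (hs : Convex ℝ s) (hM : 0 ≤ M)
    (hf : ∀ t ∈ s, HasDerivWithinAt f (f' t) s t)
    (hf' : ∀ x ∈ s, ∀ y ∈ s, |f' y - f' x| ≤ M * |y - x|) {x y : ℝ} (hx : x ∈ s) (hy : y ∈ s) :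
    |f y - f x - f' x * (y - x)| ≤ M * |y - x| ^ 2 := by
  have hg : ∀ t ∈ s, HasDerivWithinAt (fun t => f t - f' x * t) (f' t - f' x) s t := fun t ht =>
    (hf t ht).fun_sub ((hasDerivWithinAt_id t s).const_mul (f' x) |>.congr_deriv (mul_one _))
  calc |f y - f x - f' x * (y - x)| = |(f y - f' x * y) - (f x - f' x * x)| := by ring_nf
    _ ≤ M * |y - x| * |y - x| := abs_sub_le_of_hasDerivWithinAt hs hx hy hg fun t ht =>
        (hf' x hx t (hs.ordConnected.uIcc_subset hx hy ht)).trans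
          (mul_le_mul_of_nonneg_left (abs_sub_left_of_mem_uIcc ht) hM)
    _ = M * |y - x| ^ 2 := by ring

lemma abs_taylor_two_le (hs : Convex ℝ s) (hM : 0 ≤ M)
    (hf : ∀ t ∈ s, HasDerivWithinAt f (f' t) s t) (hf' : ∀ t ∈ s, HasDerivWithinAt f' (f'' t) s t)
    (hf'' : ∀ x ∈ s, ∀ y ∈ s, |f'' y - f'' x| ≤ M * |y - x|) {x y : ℝ} (hx : x ∈ s) (hy : y ∈ s) :
    |f y - f x - f' x * (y - x) - f'' x * (y - x) ^ 2 / 2| ≤ M * |y - x| ^ 3 := by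
  have hg : ∀ t ∈ s, HasDerivWithinAt (fun t => f t - f' x * t - f'' x * (t - x) ^ 2 / 2)
      (f' t - f' x - f'' x * (t - x)) s t := fun t ht => by
    have hlin : HasDerivWithinAt (fun t : ℝ => t - x) 1 s t := (hasDerivWithinAt_id t s).sub_const x
    refine (((hf t ht).fun_sub ((hasDerivWithinAt_id t s).const_mul (f' x))).fun_sub
      (((hlin.fun_pow 2).const_mul (f'' x)).div_const 2)).congr_deriv ?_
    push_cast
    ring
  calc |f y - f x - f' x * (y - x) - f'' x * (y - x) ^ 2 / 2|
      = |(f y - f' x * y - f'' x * (y - x) ^ 2 / 2) -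
          (f x - f' x * x - f'' x * (x - x) ^ 2 / 2)| := by ring_nf
    _ ≤ M * |y - x| ^ 2 * |y - x| := abs_sub_le_of_hasDerivWithinAt hs hx hy hg fun t ht =>
        (abs_taylor_one_le hs hM hf' hf'' hx (hs.ordConnected.uIcc_subset hx hy ht)).trans
          (mul_le_mul_of_nonneg_left
            (pow_le_pow_left₀ (abs_nonneg _) (abs_sub_left_of_mem_uIcc ht) 2) hM)
    _ = M * |y - x| ^ 3 := by ring

end Taylor

lemma ContDiffOn.exists_hasDerivWithinAt_two_lipschitz {a b : ℝ} (hab : a < b) {f : ℝ → ℝ}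
    (hf : ContDiffOn ℝ 3 f (Icc a b)) :
    ∃ f' f'' : ℝ → ℝ, (∀ t ∈ Icc a b, HasDerivWithinAt f (f' t) (Icc a b) t) ∧
      (∀ t ∈ Icc a b, HasDerivWithinAt f' (f'' t) (Icc a b) t) ∧
      ∀ x ∈ Icc a b, ∀ y ∈ Icc a b, |f'' y - f'' x| ≤
        sSup ((fun t => |iteratedDerivWithin 3 f (Icc a b) t|) '' Icc a b) * |y - x| := by
  have hu := uniqueDiffOn_Icc hab
  have hf' := hf.derivWithin hu (m := 2) (by norm_num)
  have hf'' := hf'.derivWithin hu (m := 1) (by norm_num)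
  refine ⟨derivWithin f (Icc a b), derivWithin (derivWithin f (Icc a b)) (Icc a b),
    fun t ht => (hf.differentiableOn (by norm_num) t ht).hasDerivWithinAt,
    fun t ht => (hf'.differentiableOn (by norm_num) t ht).hasDerivWithinAt,
    fun x hx y hy => abs_sub_le_of_hasDerivWithinAt (convex_Icc a b) hx hy
      (fun t ht => (hf''.differentiableOn one_ne_zero t ht).hasDerivWithinAt) fun t ht => ?_⟩
  have hbdd := (isCompact_Icc.image_of_continuousOn
    (hf.continuousOn_iteratedDerivWithin le_rfl hu).abs).bddAbove
  have ht' := (convex_Icc a b).ordConnected.uIcc_subset hx hy ht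
  simpa only [iteratedDerivWithin_eq_iterate, Function.iterate_succ, Function.comp_apply,
    Function.iterate_zero, id] using le_csSup hbdd (mem_image_of_mem _ ht')

lemma integral_cubic_sub (u v A B C D : ℝ) :
    ∫ y in u..v, (A + B * (y - u) + C * (y - u) ^ 2 + D * (y - u) ^ 3)
      = A * (v - u) + B * (v - u) ^ 2 / 2 + C * (v - u) ^ 3 / 3 + D * (v - u) ^ 4 / 4 := by
  have hF : ∀ y : ℝ, HasDerivAt
      (fun y => A * (y - u) + B * (y - u) ^ 2 / 2 + C * (y - u) ^ 3 / 3 + D * (y - u) ^ 4 / 4)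
      (A + B * (y - u) + C * (y - u) ^ 2 + D * (y - u) ^ 3) y := fun y => by
    have hlin : HasDerivAt (fun y : ℝ => y - u) 1 y := (hasDerivAt_id y).sub_const u
    refine (((hlin.const_mul A).fun_add ((hlin.fun_pow 2).const_mul B |>.div_const 2)).fun_add
      ((hlin.fun_pow 3).const_mul C |>.div_const 3)).fun_add
      ((hlin.fun_pow 4).const_mul D |>.div_const 4) |>.congr_deriv ?_
    push_cast
    ring
  rw [intervalIntegral.integral_eq_sub_of_hasDerivAt (fun y _ => hF y)
    (Continuous.intervalIntegrable (by fun_prop) _ _)]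
  ring

lemma abs_integral_mul_sub_integral_mul_le {e q w : ℝ → ℝ} {u v K : ℝ} (huv : u ≤ v)
    (he : ContinuousOn e (Icc u v)) (hq : ContinuousOn q (Icc u v)) (hw : ContinuousOn w (Icc u v))
    (heq : ∀ y ∈ Icc u v, |e y - q y| ≤ K) (hw1 : ∀ y ∈ Icc u v, |w y| ≤ 1) :
    |(∫ y in u..v, e y * w y) - ∫ y in u..v, q y * w y| ≤ K * (v - u) := by
  have hint : ∀ f : ℝ → ℝ, ContinuousOn f (Icc u v) → IntervalIntegrable (fun y => f y * w y)
      MeasureTheory.volume u v := fun f hf =>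
    (hf.mul hw).intervalIntegrable_of_Icc huv
  rw [← intervalIntegral.integral_sub (hint e he) (hint q hq), ← abs_of_nonneg (sub_nonneg.2 huv),
    ← Real.norm_eq_abs, ← Real.norm_eq_abs]
  refine intervalIntegral.norm_integral_le_of_norm_le_const fun y hy => ?_
  have hy : y ∈ Icc u v := Ioc_subset_Icc_self (uIoc_of_le huv ▸ hy)
  rw [Real.norm_eq_abs, ← sub_mul, abs_mul]
  simpa using mul_le_mul (heq y hy) (hw1 y hy) (abs_nonneg _) ((abs_nonneg _).trans (heq y hy))

lemma abs_integral_mul_hat_sub_le {e : ℝ → ℝ} {u v d c c' K L : ℝ} (huv : u < v)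
    (he : ContinuousOn e (Icc u v))
    (hmodel : ∀ y ∈ Icc u v, |e y - (e u + d * (y - u) + c * (y - u) ^ 2 / 2)| ≤ K)
    (hc : |c' - c| ≤ L) :
    |(∫ y in u..v, e y * ((v - y) / (v - u))) -
        (v - u) / 6 * (2 * (e u - c * (v - u) ^ 2 / 12) + (e v - c' * (v - u) ^ 2 / 12))|
      ≤ 2 * K * (v - u) + L * (v - u) ^ 3 / 36 ∧
    |(∫ y in u..v, e y * ((y - u) / (v - u))) -
        (v - u) / 6 * ((e u - c * (v - u) ^ 2 / 12) + 2 * (e v - c' * (v - u) ^ 2 / 12))|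
      ≤ 2 * K * (v - u) + L * (v - u) ^ 3 / 36 := by
  set h := v - u
  have hh : 0 < h := sub_pos.2 huv
  set q : ℝ → ℝ := fun y => e u + d * (y - u) + c * (y - u) ^ 2 / 2
  have hq : ContinuousOn q (Icc u v) := Continuous.continuousOn (by fun_prop)
  have hv := hmodel v (right_mem_Icc.2 huv.le)
  have hK : 0 ≤ K := (abs_nonneg _).trans hv
  have hL : 0 ≤ L := (abs_nonneg _).trans hc
  have hw_left : ∀ y ∈ Icc u v, |(v - y) / h| ≤ 1 := fun y hy => by
    rw [abs_le, le_div_iff₀ hh, div_le_iff₀ hh]; constructor <;> linarith [hy.1, hy.2]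
  have hw_right : ∀ y ∈ Icc u v, |(y - u) / h| ≤ 1 := fun y hy => by
    rw [abs_le, le_div_iff₀ hh, div_le_iff₀ hh]; constructor <;> linarith [hy.1, hy.2]
  have hR_left := abs_integral_mul_sub_integral_mul_le huv.le he hq
    (Continuous.continuousOn (by fun_prop)) hmodel hw_left
  have hR_right := abs_integral_mul_sub_integral_mul_le huv.le he hq
    (Continuous.continuousOn (by fun_prop)) hmodel hw_right
  have hq_left :
      ∫ y in u..v, q y * ((v - y) / h) = e u * h / 2 + d * h ^ 2 / 6 + c * h ^ 3 / 24 := by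
    rw [intervalIntegral.integral_congr (g := fun y => e u + (d - e u / h) * (y - u) +
      (c / 2 - d / h) * (y - u) ^ 2 + (-(c / (2 * h))) * (y - u) ^ 3) fun y _ => by
        rw [show v - y = h - (y - u) by ring]; field_simp; ring, integral_cubic_sub]
    field_simp
    ring
  have hq_right :
      ∫ y in u..v, q y * ((y - u) / h) = e u * h / 2 + d * h ^ 2 / 3 + c * h ^ 3 / 8 := by
    rw [intervalIntegral.integral_congr (g := fun y => 0 + (e u / h) * (y - u) +
      (d / h) * (y - u) ^ 2 + (c / (2 * h)) * (y - u) ^ 3) fun y _ => by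
        field_simp; ring, integral_cubic_sub]
    field_simp
    ring
  -- what remains: the model error at `v` enters with weight h/6 (resp. h/3), and `c' - c`
  -- with weight h³/72 (resp. h³/36)
  rw [hq_left] at hR_left
  rw [hq_right] at hR_right
  obtain ⟨hv₁, hv₂⟩ := abs_le.1 hv
  obtain ⟨hc₁, hc₂⟩ := abs_le.1 hc
  obtain ⟨hl₁, hl₂⟩ := abs_le.1 hR_left
  obtain ⟨hr₁, hr₂⟩ := abs_le.1 hR_right
  have h3 : 0 < h ^ 3 := by positivity
  constructor <;> rw [abs_le] <;> constructor <;> nlinarith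
lemma natCast_div_mem_Icc {k N : ℕ} (hk : k ≤ N) : (k : ℝ) / N ∈ Icc (0 : ℝ) 1 :=
  ⟨by positivity, div_le_one_of_le₀ (by exact_mod_cast hk) (by positivity)⟩

lemma natCast_add_one_div_mem_Icc {k N : ℕ} (hk : k < N) : ((k : ℝ) + 1) / N ∈ Icc (0 : ℝ) 1 := by
  simpa using natCast_div_mem_Icc (Nat.succ_le_of_lt hk)

def hat (N j : ℕ) (y : ℝ) : ℝ := max 0 (1 - |(N : ℝ) * y - j|)

section Hat

variable {N k : ℕ} {y : ℝ}

lemma mul_mem_Icc_of_mem_cell (hN : 0 < N) (hy : y ∈ Icc ((k : ℝ) / N) (((k : ℝ) + 1) / N)) :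
    (N : ℝ) * y ∈ Icc (k : ℝ) (k + 1) := by
  have hN' : (0 : ℝ) < N := by exact_mod_cast hN
  constructor
  · have := hy.1; rw [div_le_iff₀ hN'] at this; linarith
  · have := hy.2; rw [le_div_iff₀ hN'] at this; linarith

lemma hat_self_eq (hN : 0 < N) (hy : y ∈ Icc ((k : ℝ) / N) (((k : ℝ) + 1) / N)) :
    hat N k y = ((k + 1) / N - y) / ((k + 1) / N - k / N) := by
  obtain ⟨h₁, h₂⟩ := mul_mem_Icc_of_mem_cell hN hy
  have hN' : (N : ℝ) ≠ 0 := by positivity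
  rw [hat, abs_of_nonneg (by linarith), max_eq_right (by linarith)]
  field_simp
  ring

lemma hat_succ_eq (hN : 0 < N) (hy : y ∈ Icc ((k : ℝ) / N) (((k : ℝ) + 1) / N)) :
    hat N (k + 1) y = (y - k / N) / ((k + 1) / N - k / N) := by
  obtain ⟨h₁, h₂⟩ := mul_mem_Icc_of_mem_cell hN hy
  have hN' : (N : ℝ) ≠ 0 := by positivity
  rw [hat, Nat.cast_succ, abs_of_nonpos (by linarith), max_eq_right (by linarith)]
  field_simp
  ring

lemma hat_eq_zero {j : ℕ} (hN : 0 < N) (hy : y ∈ Icc ((k : ℝ) / N) (((k : ℝ) + 1) / N))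
    (hjk : j ≠ k) (hjk' : j ≠ k + 1) : hat N j y = 0 := by
  obtain ⟨h₁, h₂⟩ := mul_mem_Icc_of_mem_cell hN hy
  refine max_eq_left (sub_nonpos.2 ?_)
  rcases Nat.lt_or_gt_of_ne hjk with hj | hj
  · have : (j : ℝ) + 1 ≤ k := by exact_mod_cast hj
    rw [abs_of_nonneg (by linarith)]; linarith
  · have : (k : ℝ) + 2 ≤ j := by exact_mod_cast (by omega : k + 2 ≤ j)
    rw [abs_of_nonpos (by linarith)]; linarith

lemma hat_mem_PL (hN : 0 < N) (j : ℕ) : hat N j ∈ PL N := by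
  refine ⟨Continuous.continuousOn (by unfold hat; fun_prop), fun k _ => ?_⟩
  by_cases hjk : j = k
  · subst hjk
    exact ⟨-1 / ((j + 1) / N - j / N), ((j + 1) / N) / ((j + 1) / N - j / N),
      fun y hy => (hat_self_eq hN hy).trans (by ring)⟩
  by_cases hjk' : j = k + 1
  · subst hjk'
    exact ⟨1 / ((k + 1) / N - k / N), -(k / N) / ((k + 1) / N - k / N),
      fun y hy => (hat_succ_eq hN hy).trans (by ring)⟩
  exact ⟨0, 0, fun y hy => (hat_eq_zero hN hy hjk hjk').trans (by ring)⟩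

end Hat

lemma integral_cell_mul_hat_eq_zero {N k j : ℕ} (hN : 0 < N) (φ : ℝ → ℝ) (hjk : j ≠ k)
    (hjk' : j ≠ k + 1) : ∫ y in (k : ℝ) / N..((k : ℝ) + 1) / N, φ y * hat N j y = 0 := by
  have hle : (k : ℝ) / N ≤ ((k : ℝ) + 1) / N := by gcongr; linarith
  rw [intervalIntegral.integral_congr (g := fun _ => 0) fun y hy => by
    rw [uIcc_of_le hle] at hy; simp [hat_eq_zero hN hy hjk hjk']]
  simp

lemma sum_integral_cell_mul_hat_eq_zero {N : ℕ} (hN : 0 < N) {f g : ℝ → ℝ}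
    (hf : ContinuousOn f (Icc 0 1)) (hg : IsL2ProjOn (PL N) f g) (j : ℕ) :
    ∑ k ∈ Finset.range N, ∫ y in (k : ℝ) / N..((k : ℝ) + 1) / N, (f y - g y) * hat N j y = 0 := by
  have hcont : ContinuousOn (fun y => (f y - g y) * hat N j y) (Icc 0 1) :=
    (hf.sub hg.1.1).mul (hat_mem_PL hN j).1
  have hsum := intervalIntegral.sum_integral_adjacent_intervals (μ := MeasureTheory.volume)
    (f := fun y => (f y - g y) * hat N j y)
    (a := fun k : ℕ => (k : ℝ) / N) (n := N) fun k hk =>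
      (hcont.mono (ordConnected_Icc.uIcc_subset (natCast_div_mem_Icc hk.le)
        (natCast_div_mem_Icc hk))).intervalIntegrable
  push_cast at hsum
  rw [hsum, zero_div, div_self (by positivity)]
  exact hg.2 _ (hat_mem_PL hN j)


lemma abs_le_of_abs_massMatrix_le {N : ℕ} (hN : 0 < N) {D : ℕ → ℝ} {h ε : ℝ} (hh : 0 < h)
    (h_first : |h / 6 * (2 * D 0 + D 1)| ≤ ε)
    (h_last : |h / 6 * (D (N - 1) + 2 * D N)| ≤ ε)
    (h_mid : ∀ q, q + 2 ≤ N → |h / 6 * (D q + 4 * D (q + 1) + D (q + 2))| ≤ ε) :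
    ∀ j ≤ N, |D j| ≤ 6 * ε / h := by
  obtain ⟨j₀, hj₀, hmax⟩ :=
    Finset.exists_max_image (Finset.range (N + 1)) (fun j => |D j|) ⟨0, by simp⟩
  replace hmax : ∀ j ≤ N, |D j| ≤ |D j₀| := fun j hj => hmax j (by simpa [Nat.lt_succ_iff] using hj)
  replace hj₀ : j₀ ≤ N := by simpa [Nat.lt_succ_iff] using hj₀
  -- the row of the mass matrix through a maximal entry is diagonally dominant
  suffices ∃ r, |D j₀| ≤ |r| ∧ |h / 6 * r| ≤ ε by
    obtain ⟨r, hr, hrε⟩ := this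
    rw [abs_mul, abs_of_pos (by positivity : 0 < h / 6)] at hrε
    intro j hj
    rw [le_div_iff₀ hh]
    nlinarith [hmax j hj]
  rcases Nat.eq_zero_or_pos j₀ with rfl | hpos
  · refine ⟨_, ?_, h_first⟩
    have := abs_sub (2 * D 0 + D 1) (D 1)
    rw [add_sub_cancel_right, abs_mul, abs_two] at this
    linarith [hmax 1 hN]
  rcases eq_or_lt_of_le hj₀ with rfl | hlt
  · refine ⟨_, ?_, h_last⟩
    have := abs_sub (D (j₀ - 1) + 2 * D j₀) (D (j₀ - 1))
    rw [add_sub_cancel_left, abs_mul, abs_two] at this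
    linarith [hmax (j₀ - 1) (by omega)]
  · obtain ⟨q, rfl⟩ : ∃ q, j₀ = q + 1 := ⟨j₀ - 1, by omega⟩
    refine ⟨_, ?_, h_mid q (by omega)⟩
    have := abs_sub (D q + 4 * D (q + 1) + D (q + 2)) (D q + D (q + 2))
    rw [show D q + 4 * D (q + 1) + D (q + 2) - (D q + D (q + 2)) = 4 * D (q + 1) by ring,
      abs_mul, abs_of_pos four_pos] at this
    linarith [abs_add_le (D q) (D (q + 2)), hmax q (by omega), hmax (q + 2) (by omega),
      abs_nonneg (D (q + 1))]

def correctedNodalError (N : ℕ) (η η'' Pη : ℝ → ℝ) (j : ℕ) : ℝ :=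
  η (j / N) - Pη (j / N) - η'' (j / N) * (1 / N) ^ 2 / 12

lemma abs_integral_proj_error_mul_hat_sub_le {N k : ℕ} (hk : k < N) {η η' η'' Pη : ℝ → ℝ}
    {M : ℝ} (hM : 0 ≤ M) (hη : ContinuousOn η (Icc 0 1))
    (htaylor : ∀ x ∈ Icc (0 : ℝ) 1, ∀ y ∈ Icc (0 : ℝ) 1,
      |η y - η x - η' x * (y - x) - η'' x * (y - x) ^ 2 / 2| ≤ M * |y - x| ^ 3)
    (hlip : ∀ x ∈ Icc (0 : ℝ) 1, ∀ y ∈ Icc (0 : ℝ) 1, |η'' y - η'' x| ≤ M * |y - x|)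
    (hP : IsL2ProjOn (PL N) η Pη) :
    |(∫ y in (k : ℝ) / N..((k : ℝ) + 1) / N, (η y - Pη y) * hat N k y) - 1 / N / 6 *
        (2 * correctedNodalError N η η'' Pη k + correctedNodalError N η η'' Pη (k + 1))|
      ≤ 3 * M * (1 / N) ^ 4 ∧
    |(∫ y in (k : ℝ) / N..((k : ℝ) + 1) / N, (η y - Pη y) * hat N (k + 1) y) - 1 / N / 6 *
        (correctedNodalError N η η'' Pη k + 2 * correctedNodalError N η η'' Pη (k + 1))|
      ≤ 3 * M * (1 / N) ^ 4 := by
  have hN : (0 : ℝ) < N := by exact_mod_cast hk.pos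
  set u : ℝ := k / N
  set v : ℝ := (k + 1) / N
  have hvu : v - u = 1 / N := by ring
  have huv : u < v := by rw [← sub_pos, hvu]; positivity
  have hu : u ∈ Icc 0 1 := natCast_div_mem_Icc hk.le
  have hv : v ∈ Icc 0 1 := natCast_add_one_div_mem_Icc hk
  have hsub : Icc u v ⊆ Icc 0 1 := Icc_subset_Icc hu.1 hv.2
  obtain ⟨a, b, hab⟩ := hP.1.2 k hk
  have hmodel : ∀ y ∈ Icc u v, |η y - Pη y - (η u - Pη u + (η' u - a) * (y - u) +
      η'' u * (y - u) ^ 2 / 2)| ≤ M * (v - u) ^ 3 := fun y hy => by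
    rw [hab y hy, hab u (left_mem_Icc.2 (hy.1.trans hy.2))]
    calc _ = |η y - η u - η' u * (y - u) - η'' u * (y - u) ^ 2 / 2| := by ring_nf
      _ ≤ M * |y - u| ^ 3 := htaylor u hu y (hsub hy)
      _ ≤ M * (v - u) ^ 3 := by
        rw [abs_of_nonneg (sub_nonneg.2 hy.1)]; gcongr; exacts [sub_nonneg.2 hy.1, hy.2]
  have hcurv : |η'' v - η'' u| ≤ M * (v - u) := by
    simpa [abs_of_pos (sub_pos.2 huv)] using hlip u hu v hv
  have hcell := abs_integral_mul_hat_sub_le (e := fun y => η y - Pη y) huv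
    ((hη.mono hsub).sub (hP.1.1.mono hsub)) hmodel hcurv
  have hD : correctedNodalError N η η'' Pη k = η u - Pη u - η'' u * (v - u) ^ 2 / 12 := by
    rw [hvu]; rfl
  have hD' : correctedNodalError N η η'' Pη (k + 1) = η v - Pη v - η'' v * (v - u) ^ 2 / 12 := by
    rw [hvu]; simp [correctedNodalError, v]
  have hI : ∀ (j : ℕ) (w : ℝ → ℝ), (∀ y ∈ Icc u v, hat N j y = w y) →
      ∫ y in u..v, (η y - Pη y) * hat N j y = ∫ y in u..v, (η y - Pη y) * w y := fun j w hw =>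
    intervalIntegral.integral_congr fun y hy => by
      rw [uIcc_of_le huv.le] at hy; simp only [hw y hy]
  rw [hI k _ fun y hy => hat_self_eq hk.pos hy, hI (k + 1) _ fun y hy => hat_succ_eq hk.pos hy,
    hD, hD', ← hvu]
  have hbound : 2 * (M * (v - u) ^ 3) * (v - u) + M * (v - u) * (v - u) ^ 3 / 36
      ≤ 3 * M * (v - u) ^ 4 := by
    nlinarith [show 0 ≤ M * (v - u) ^ 4 by positivity]
  exact ⟨hcell.1.trans hbound, hcell.2.trans hbound⟩

theorem abs_correctedNodalError_le {N : ℕ} (hN : 0 < N) {η η' η'' Pη : ℝ → ℝ} {M : ℝ}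
    (hM : 0 ≤ M) (hη : ContinuousOn η (Icc 0 1))
    (htaylor : ∀ x ∈ Icc (0 : ℝ) 1, ∀ y ∈ Icc (0 : ℝ) 1,
      |η y - η x - η' x * (y - x) - η'' x * (y - x) ^ 2 / 2| ≤ M * |y - x| ^ 3)
    (hlip : ∀ x ∈ Icc (0 : ℝ) 1, ∀ y ∈ Icc (0 : ℝ) 1, |η'' y - η'' x| ≤ M * |y - x|)
    (hP : IsL2ProjOn (PL N) η Pη) :
    ∀ j ≤ N, |correctedNodalError N η η'' Pη j| ≤ 36 * M * (1 / N) ^ 3 := by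
  have hcell k (hk : k < N) := abs_integral_proj_error_mul_hat_sub_le hk hM hη htaylor hlip hP
  have hrow := sum_integral_cell_mul_hat_eq_zero hN hη hP
  have hzero k j (hjk : j ≠ k) (hjk' : j ≠ k + 1) := integral_cell_mul_hat_eq_zero (k := k) hN
    (fun y => η y - Pη y) hjk hjk'
  have hM4 : 0 ≤ M * (1 / N : ℝ) ^ 4 := by positivity
  intro j hj
  refine (abs_le_of_abs_massMatrix_le hN (h := 1 / N) (ε := 6 * M * (1 / N) ^ 4) (by positivity)
    ?_ ?_ ?_ j hj).trans_eq (by field_simp; ring)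
  · have h0 := hrow 0
    rw [Finset.sum_eq_single_of_mem 0 (by simpa using hN)
      fun k _ hk => hzero k 0 (Ne.symm hk) (by omega)] at h0
    have := (hcell 0 hN).1
    rw [h0, zero_sub, abs_neg] at this
    linarith
  · obtain ⟨p, rfl⟩ : ∃ p, N = p + 1 := ⟨N - 1, by omega⟩
    have hp := hrow (p + 1)
    rw [Finset.sum_eq_single_of_mem p (by simp)
      fun k hk hkp => hzero k (p + 1) (by simp at hk; omega) (by omega)] at hp
    have := (hcell p (by omega)).2
    rw [hp, zero_sub, abs_neg] at this
    rw [Nat.add_sub_cancel]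
    linarith
  · intro q hq
    have hq' := hrow (q + 1)
    rw [Finset.sum_eq_add_of_mem q (q + 1) (by simp; omega) (by simp; omega) (by omega)
      fun k _ hk => hzero k (q + 1) (by omega) (by omega)] at hq'
    have h₁ := (hcell q (by omega)).2
    have h₂ := (hcell (q + 1) (by omega)).1
    obtain ⟨l₁, u₁⟩ := abs_le.1 h₁
    obtain ⟨l₂, u₂⟩ := abs_le.1 h₂
    rw [abs_le]
    constructor
    · linear_combination u₁ + u₂ - hq'
    · linear_combination l₁ + l₂ + hq'

lemma abs_proj_error_succ_sub_le {N i : ℕ} (hi : i < N) {η η' η'' Pη : ℝ → ℝ} {M : ℝ}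
    (hM : 0 ≤ M) (hη : ContinuousOn η (Icc 0 1))
    (htaylor : ∀ x ∈ Icc (0 : ℝ) 1, ∀ y ∈ Icc (0 : ℝ) 1,
      |η y - η x - η' x * (y - x) - η'' x * (y - x) ^ 2 / 2| ≤ M * |y - x| ^ 3)
    (hlip : ∀ x ∈ Icc (0 : ℝ) 1, ∀ y ∈ Icc (0 : ℝ) 1, |η'' y - η'' x| ≤ M * |y - x|)
    (hP : IsL2ProjOn (PL N) η Pη) :
    |(η ((i + 1) / N) - Pη ((i + 1) / N)) - (η (i / N) - Pη (i / N))|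
      ≤ (72 + 1 / 12) * M * (1 / N) ^ 3 := by
  have hnode := abs_correctedNodalError_le (by omega) hM hη htaylor hlip hP
  have hh : (0 : ℝ) < 1 / N := one_div_pos.2 (by exact_mod_cast hi.pos)
  set u : ℝ := i / N
  set v : ℝ := (i + 1) / N
  have h₀ : |η u - Pη u - η'' u * (1 / N) ^ 2 / 12| ≤ 36 * M * (1 / N) ^ 3 := hnode i hi.le
  have h₁ : |η v - Pη v - η'' v * (1 / N) ^ 2 / 12| ≤ 36 * M * (1 / N) ^ 3 := by
    simpa only [correctedNodalError, Nat.cast_succ] using hnode (i + 1) hi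
  have hc : |(η'' v - η'' u) * ((1 / N) ^ 2 / 12)| ≤ M * (1 / N) * ((1 / N) ^ 2 / 12) := by
    have := hlip u (natCast_div_mem_Icc hi.le) v (natCast_add_one_div_mem_Icc hi)
    rw [show v - u = 1 / N by ring, abs_of_pos hh] at this
    rw [abs_mul, abs_of_pos (a := (1 / (N : ℝ)) ^ 2 / 12) (by positivity)]
    exact mul_le_mul_of_nonneg_right this (by positivity)
  calc |(η v - Pη v) - (η u - Pη u)|
      = |(η v - Pη v - η'' v * (1 / N) ^ 2 / 12) - (η u - Pη u - η'' u * (1 / N) ^ 2 / 12)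
          + (η'' v - η'' u) * ((1 / N) ^ 2 / 12)| := by ring_nf
    _ ≤ 36 * M * (1 / N) ^ 3 + 36 * M * (1 / N) ^ 3 + M * (1 / N) * ((1 / N) ^ 2 / 12) :=
        (abs_add_le _ _).trans (add_le_add ((abs_sub _ _).trans (add_le_add h₁ h₀)) hc)
    _ = (72 + 1 / 12) * M * (1 / N) ^ 3 := by ring

lemma abs_deriv_sub_affine_midpoint_le {η η' η'' g : ℝ → ℝ} {u v a b M : ℝ} (huv : u < v)
    (hη : HasDerivAt η (η' ((u + v) / 2)) ((u + v) / 2))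
    (htaylor : ∀ y ∈ Icc u v, |η y - η ((u + v) / 2) - η' ((u + v) / 2) * (y - (u + v) / 2) -
      η'' ((u + v) / 2) * (y - (u + v) / 2) ^ 2 / 2| ≤ M * |y - (u + v) / 2| ^ 3)
    (hg : ∀ y ∈ Icc u v, g y = a * y + b) :
    |deriv (fun y => η y - g y) ((u + v) / 2)|
      ≤ |(η v - g v) - (η u - g u)| / (v - u) + M * (v - u) ^ 2 / 4 := by
  set m := (u + v) / 2 with hm
  have hh : 0 < v - u := sub_pos.2 huv
  have hu := left_mem_Icc.2 huv.le
  have hv := right_mem_Icc.2 huv.le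
  have hg' : HasDerivAt g a m :=
    ((hasDerivAt_id m).const_mul a |>.add_const b |>.congr_deriv (mul_one a)).congr_of_eventuallyEq
      (Filter.eventuallyEq_of_mem (Icc_mem_nhds (by linarith) (by linarith)) hg)
  have htaylor_u := htaylor u hu
  have htaylor_v := htaylor v hv
  rw [show u - m = -((v - u) / 2) by ring, abs_neg, abs_of_pos (half_pos hh)] at htaylor_u
  rw [show v - m = (v - u) / 2 by ring, abs_of_pos (half_pos hh)] at htaylor_v
  rw [(hη.fun_sub hg').deriv, hg u hu, hg v hv]
  -- the second-order terms of the Taylor expansions at the midpoint cancel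
  have key : η' m - a = ((η v - (a * v + b) - (η u - (a * u + b))) -
      ((η v - η m - η' m * ((v - u) / 2) - η'' m * ((v - u) / 2) ^ 2 / 2) -
        (η u - η m - η' m * (-((v - u) / 2)) - η'' m * (-((v - u) / 2)) ^ 2 / 2))) / (v - u) := by
    field_simp
    ring
  rw [key, abs_div, abs_of_pos hh]
  calc _ ≤ (|η v - (a * v + b) - (η u - (a * u + b))| + (M * ((v - u) / 2) ^ 3 +
        M * ((v - u) / 2) ^ 3)) / (v - u) := by
        gcongr
        exact (abs_sub _ _).trans (add_le_add le_rfl ((abs_sub _ _).trans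
          (add_le_add htaylor_v htaylor_u)))
    _ = _ := by field_simp; ring

/-- **Superaccuracy of the derivative of the L² projection error at midpoints
(`S_h` case).** -/
theorem stmt_8 :
    ∃ C : ℝ → ℝ,
      ∀ (η Pη : ℝ → ℝ) (N : ℕ), 2 ≤ N →
        ContDiffOn ℝ 3 η (Icc (0:ℝ) 1) →
        IsL2ProjOn (PL N) η Pη →
        ∀ i < N,
          |deriv (fun y => η y - Pη y) (((i : ℝ) + 1/2)/N)|
            ≤ C (sSup ((fun y => |iteratedDerivWithin 3 η (Icc (0:ℝ) 1) y|) '' Icc (0:ℝ) 1))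
                * ((1:ℝ)/N) ^ 2 := by
  refine ⟨fun M => 73 * M, fun η Pη N hN hη hP i hi => ?_⟩
  obtain ⟨η', η'', hη', hη'', hlip⟩ := hη.exists_hasDerivWithinAt_two_lipschitz zero_lt_one
  set M := sSup ((fun y => |iteratedDerivWithin 3 η (Icc (0:ℝ) 1) y|) '' Icc (0:ℝ) 1)
  have hM : 0 ≤ M := by simpa using (abs_nonneg _).trans (hlip 0 (by simp) 1 (by simp))
  have htaylor x hx y hy :=
    abs_taylor_two_le (convex_Icc 0 1) hM hη' hη'' hlip (x := x) (y := y) hx hy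
  have hjump := abs_proj_error_succ_sub_le hi hM hη.continuousOn htaylor hlip hP
  have hh : (0 : ℝ) < 1 / N := one_div_pos.2 (by exact_mod_cast (by omega : 0 < N))
  set u : ℝ := i / N
  set v : ℝ := (i + 1) / N
  have hu : u ∈ Icc 0 1 := natCast_div_mem_Icc hi.le
  have hv : v ∈ Icc 0 1 := natCast_add_one_div_mem_Icc hi
  have hvu : v - u = 1 / N := by ring
  have hm : (u + v) / 2 ∈ Ioo 0 1 := ⟨by linarith [hu.1], by linarith [hv.2]⟩
  obtain ⟨a, b, hab⟩ := hP.1.2 i hi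
  have hmid := abs_deriv_sub_affine_midpoint_le (by linarith)
    ((hη' _ (Ioo_subset_Icc_self hm)).hasDerivAt (Icc_mem_nhds hm.1 hm.2))
    (fun y hy => htaylor _ (Ioo_subset_Icc_self hm) y (Icc_subset_Icc hu.1 hv.2 hy)) hab
  rw [show ((i : ℝ) + 1 / 2) / N = (u + v) / 2 by ring]
  calc _ ≤ (72 + 1 / 12) * M * (1 / N) ^ 3 / (1 / N) + M * (1 / N) ^ 2 / 4 := by
        exact hmid.trans (by rw [hvu]; gcongr)
    _ ≤ 73 * M * (1 / N) ^ 2 := by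
      field_simp
      nlinarith
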